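/- arXiv:2602.04019 — 2 statements merged into one kernel-verified Lean document; each statement's English description precedes it below -/
import Mathlib

section
/- Let H be a symmetric positive definite matrix written as H = D + E where D is the block-diagonal part (with each diagonal block positive definite) and E the off-diagonal part. Define M = D^{-1/2} E D^{-1/2} and ρ = ‖M‖₂, and assume ρ < 1. Then for any vector g, the difference between the global minimizer θ_glob = -H^{-1} g and the blockwise minimizer θ_loc = -D^{-1} g satisfies ‖θ_glob - θ_loc‖₂ ≤ (ρ/(1-ρ)) · ‖D^{-1}‖₂ · ‖g‖₂. -/
open Matrix MeasureTheory BigOperators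
noncomputable section

/-- Euclidean (spectral / operator) norm of a real square matrix. -/
def opN {n : Type*} [Fintype n] [DecidableEq n] (A : Matrix n n ℝ) : ℝ :=
  ‖Matrix.toEuclideanCLM (𝕜 := ℝ) A‖

/-- Euclidean norm of a vector. -/
def vN {n : Type*} [Fintype n] (v : n → ℝ) : ℝ := Real.sqrt (∑ i, v i ^ 2)

/-- The square root of a positive semidefinite matrix, as `Matrix.PosSemidef.sqrt` was defined
in the older Mathlib. -/
def psdSqrt {n : Type*} [Fintype n] [DecidableEq n] {A : Matrix n n ℝ} (hA : A.PosSemidef) :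
    Matrix n n ℝ :=
  hA.1.eigenvectorUnitary.1 * diagonal ((↑) ∘ (√·) ∘ hA.1.eigenvalues) *
    (star hA.1.eigenvectorUnitary : Matrix n n ℝ)

/-! Write `D = S * S` with `S = D^{1/2}` symmetric. Then `H = D + E = S (1 + M) S`, and since
`‖M‖ < 1` the Neumann series makes `1 + M` invertible with `‖(1 + M)⁻¹‖ ≤ 1 / (1 - ρ)`. Hence
`D⁻¹ - H⁻¹ = S⁻¹ (1 + M)⁻¹ M S⁻¹` has norm at most `ρ / (1 - ρ) · ‖S⁻¹‖²`, and
`‖S⁻¹‖² = ‖S⁻¹ S⁻¹‖ = ‖D⁻¹‖` by the C⋆-identity for the symmetric matrix `S⁻¹`. -/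

open scoped Ring

theorem Ring.inverse_mul_self_sub_inverse_mul_one_add_mul {R : Type*} [Ring R] {s m : R}
    (hs : IsUnit s) (hm : IsUnit (1 + m)) :
    (s * s)⁻¹ʳ - (s * (1 + m) * s)⁻¹ʳ = s⁻¹ʳ * ((1 + m)⁻¹ʳ * m) * s⁻¹ʳ := by
  obtain ⟨u, rfl⟩ := hs
  obtain ⟨v, hv⟩ := hm
  have hmv : m = v - 1 := by rw [hv]; abel
  rw [← hv, ← Units.val_mul, ← Units.val_mul, ← Units.val_mul]
  simp only [Ring.inverse_unit]
  simp only [_root_.mul_inv_rev, Units.val_mul]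
  rw [hmv, mul_sub, Units.inv_mul, mul_one]
  noncomm_ring

theorem IsUnit.mul_one_add_inverse_mul_mul_inverse_mul {R : Type*} [Ring R] {s : R}
    (hs : IsUnit s) (e : R) : s * (1 + s⁻¹ʳ * e * s⁻¹ʳ) * s = s * s + e := by
  simp only [mul_add, add_mul, mul_one, ← mul_assoc, Ring.mul_inverse_cancel s hs, one_mul]
  simp only [mul_assoc, Ring.inverse_mul_cancel s hs, mul_one]

section NormedRing

variable {R : Type*} [NormedRing R] [HasSummableGeomSeries R]

theorem norm_inverse_one_add_le (h1 : ‖(1 : R)‖ ≤ 1) {m : R} (hm : ‖m‖ < 1) :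
    ‖(1 + m)⁻¹ʳ‖ ≤ (1 - ‖m‖)⁻¹ := by
  rw [← norm_neg m] at hm ⊢
  rw [← sub_neg_eq_add, ← geom_series_eq_inverse _ hm]
  linarith [tsum_geometric_le_of_norm_lt_one _ hm]

theorem norm_inverse_mul_self_sub_inverse_mul_one_add_mul_le (h1 : ‖(1 : R)‖ ≤ 1) {s m : R}
    (hs : IsUnit s) (hm : ‖m‖ < 1) :
    ‖(s * s)⁻¹ʳ - (s * (1 + m) * s)⁻¹ʳ‖ ≤ ‖m‖ / (1 - ‖m‖) * (‖s⁻¹ʳ‖ * ‖s⁻¹ʳ‖) := by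
  have hm' : IsUnit (1 + m) := by
    simpa using isUnit_one_sub_of_norm_lt_one (x := -m) (by rwa [norm_neg])
  rw [Ring.inverse_mul_self_sub_inverse_mul_one_add_mul hs hm']
  calc ‖s⁻¹ʳ * ((1 + m)⁻¹ʳ * m) * s⁻¹ʳ‖
      ≤ ‖s⁻¹ʳ‖ * (‖(1 + m)⁻¹ʳ‖ * ‖m‖) * ‖s⁻¹ʳ‖ := by
        grw [norm_mul_le, norm_mul_le, norm_mul_le]
    _ ≤ ‖s⁻¹ʳ‖ * ((1 - ‖m‖)⁻¹ * ‖m‖) * ‖s⁻¹ʳ‖ := by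
        grw [norm_inverse_one_add_le h1 hm]
    _ = ‖m‖ / (1 - ‖m‖) * (‖s⁻¹ʳ‖ * ‖s⁻¹ʳ‖) := by ring

end NormedRing

namespace Matrix

open scoped Matrix.Norms.L2Operator

-- `opN A` unfolds to `‖A‖` for this scoped L2 operator norm, which the proofs below rely on.

variable {n : Type*} [Fintype n]

theorem vN_eq_norm (v : n → ℝ) : vN v = ‖(EuclideanSpace.equiv n ℝ).symm v‖ := by
  simp [vN, EuclideanSpace.norm_eq]

variable [DecidableEq n]

theorem l2_opNorm_one_le {𝕜 : Type*} [RCLike 𝕜] : ‖(1 : Matrix n n 𝕜)‖ ≤ 1 := by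
  rw [← l2_opNorm_toEuclideanCLM, map_one]
  exact ContinuousLinearMap.norm_id_le

theorem IsHermitian.l2_opNorm_mul_self {𝕜 : Type*} [RCLike 𝕜] {A : Matrix n n 𝕜}
    (hA : A.IsHermitian) : ‖A * A‖ = ‖A‖ * ‖A‖ := by
  simpa only [hA.eq] using l2_opNorm_conjTranspose_mul_self A

theorem IsHermitian.l2_opNorm_inv_mul_self_sub_inv_le {𝕜 : Type*} [RCLike 𝕜]
    {S M : Matrix n n 𝕜} (hS : S.IsHermitian) (hSu : IsUnit S) (hM : ‖M‖ < 1) :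
    ‖(S * S)⁻¹ - (S * (1 + M) * S)⁻¹‖ ≤ ‖M‖ / (1 - ‖M‖) * ‖(S * S)⁻¹‖ := by
  have := norm_inverse_mul_self_sub_inverse_mul_one_add_mul_le l2_opNorm_one_le hSu hM
  simp only [← nonsing_inv_eq_ringInverse] at this
  rwa [← hS.inv.l2_opNorm_mul_self, ← mul_inv_rev] at this

theorem vN_mulVec_le (A : Matrix n n ℝ) (v : n → ℝ) : vN (A *ᵥ v) ≤ opN A * vN v := by
  rw [vN_eq_norm, vN_eq_norm]
  exact l2_opNorm_mulVec A _

theorem psdSqrt_mul_self {A : Matrix n n ℝ} (hA : A.PosSemidef) :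
    psdSqrt hA * psdSqrt hA = A := by
  conv_rhs => rw [hA.1.spectral_theorem]
  rw [psdSqrt, Unitary.conjStarAlgAut_apply]
  simp only [Matrix.mul_assoc]
  rw [← Matrix.mul_assoc (star _ : Matrix n n ℝ) _ (diagonal _ * _), Unitary.coe_star_mul_self,
    Matrix.one_mul, ← Matrix.mul_assoc (diagonal _), diagonal_mul_diagonal]
  congr 3
  funext i
  simp [Real.mul_self_sqrt (hA.eigenvalues_nonneg i)]

theorem isHermitian_psdSqrt {A : Matrix n n ℝ} (hA : A.PosSemidef) :
    (psdSqrt hA).IsHermitian := by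
  unfold psdSqrt IsHermitian
  simp [Matrix.mul_assoc, Matrix.star_eq_conjTranspose, conjTranspose_eq_transpose_of_trivial]

end Matrix

theorem global_vs_blockwise_oracle_general
    {n : Type*} [Fintype n] [DecidableEq n]
    (H D E M : Matrix n n ℝ)
    (hD : D.PosDef)
    (hE : E = H - D)
    (hM : M = (psdSqrt hD.posSemidef)⁻¹ * E * (psdSqrt hD.posSemidef)⁻¹)
    (ρ : ℝ) (hρ : ρ = opN M) (hρ1 : ρ < 1) (g : n → ℝ) :
    vN ((-(H⁻¹ *ᵥ g)) - (-(D⁻¹ *ᵥ g))) ≤ ρ / (1 - ρ) * opN D⁻¹ * vN g := by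
  have hSS := psdSqrt_mul_self hD.posSemidef
  have hS := isHermitian_psdSqrt hD.posSemidef
  generalize psdSqrt hD.posSemidef = S at hSS hS hM
  subst hSS hρ
  have hSu : IsUnit S := isUnit_of_mul_isUnit_left hD.isUnit
  have hH : H = S * (1 + M) * S := by
    rw [hM, hE, nonsing_inv_eq_ringInverse, hSu.mul_one_add_inverse_mul_mul_inverse_mul,
      add_sub_cancel]
  have hgap : opN ((S * S)⁻¹ - H⁻¹) ≤ opN M / (1 - opN M) * opN (S * S)⁻¹ := by
    rw [hH]
    exact hS.l2_opNorm_inv_mul_self_sub_inv_le hSu hρ1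
  calc vN (-(H⁻¹ *ᵥ g) - -((S * S)⁻¹ *ᵥ g)) = vN (((S * S)⁻¹ - H⁻¹) *ᵥ g) := by
        rw [sub_mulVec, neg_sub_neg]
    _ ≤ opN ((S * S)⁻¹ - H⁻¹) * vN g := vN_mulVec_le _ _
    _ ≤ opN M / (1 - opN M) * opN (S * S)⁻¹ * vN g := by
        gcongr
        exact Real.sqrt_nonneg _

/-- gap between the global quadratic minimizer `-H⁻¹ g` and the
blockwise minimizer `-D⁻¹ g` is controlled by the whitened coupling `ρ`. -/
theorem global_vs_blockwise_oracle
    {n L : Type*} [Fintype n] [DecidableEq n]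
    (blk : n → L) [DecidableEq L] (H D E M : Matrix n n ℝ)
    (hH : H.PosDef) (hHsymm : H.IsSymm) (hD : D.PosDef)
    (hDdef : ∀ i j, D i j = if blk i = blk j then H i j else 0)
    (hE : E = H - D)
    (hM : M = (psdSqrt hD.posSemidef)⁻¹ * E * (psdSqrt hD.posSemidef)⁻¹)
    (ρ : ℝ) (hρ : ρ = opN M) (hρ1 : ρ < 1) (g : n → ℝ) :
    vN ((-(H⁻¹ *ᵥ g)) - (-(D⁻¹ *ᵥ g))) ≤ ρ / (1 - ρ) * opN D⁻¹ * vN g :=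
  global_vs_blockwise_oracle_general H D E M hD hE hM ρ hρ hρ1 g
end
end

section
/- Let H_SS ≻ 0 with block-diagonal part D_S and off-diagonal part E_S = H_SS - D_S; set M_S = D_S^{-1/2} E_S D_S^{-1/2} and ρ_S = ‖M_S‖₂ < 1. Define Δ(S) = ½ g_Sᵀ H_SS^{-1} g_S and Δ_add(S) = ½ g_Sᵀ D_S^{-1} g_S. Then (1/(1+ρ_S)) Δ_add(S) ≤ Δ(S) ≤ (1/(1-ρ_S)) Δ_add(S), and |Δ(S) - Δ_add(S)| ≤ (ρ_S/(1-ρ_S)) Δ_add(S). -/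
/-!
Write `H = D^{1/2} (1 + M) D^{1/2}`. Since `|u ⬝ᵥ M *ᵥ u| ≤ ρ ‖u‖²`, substituting `u = D^{1/2} x`
gives `(1 - ρ) D ≤ H ≤ (1 + ρ) D` as quadratic forms. Inversion reverses this order, because
`y ⬝ᵥ A⁻¹ *ᵥ y = max_x (2 (x ⬝ᵥ y) - x ⬝ᵥ A *ᵥ x)`, so `Δ_add / (1 + ρ) ≤ Δ ≤ Δ_add / (1 - ρ)`.
Finally `|Δ - Δ_add| ≤ ρ Δ ≤ ρ / (1 - ρ) Δ_add`.
-/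

open Matrix MeasureTheory BigOperators
open scoped MatrixOrder
noncomputable section

namespace Matrix

variable {n : Type*} [Fintype n] [DecidableEq n]

lemma abs_dotProduct_mulVec_self_le_opN (M : Matrix n n ℝ) (u : n → ℝ) :
    |u ⬝ᵥ M *ᵥ u| ≤ opN M * (u ⬝ᵥ u) := by
  set v := WithLp.toLp 2 u
  have hv : ‖v‖ ^ 2 = u ⬝ᵥ u := by
    rw [← real_inner_self_eq_norm_sq, EuclideanSpace.inner_toLp_toLp, star_trivial]
  calc |u ⬝ᵥ M *ᵥ u| = |inner ℝ v (toEuclideanCLM (𝕜 := ℝ) M v)| := by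
        rw [inner_toEuclideanCLM]
    _ ≤ ‖v‖ * ‖toEuclideanCLM (𝕜 := ℝ) M v‖ := abs_real_inner_le_norm _ _
    _ ≤ ‖v‖ * (opN M * ‖v‖) := by gcongr; exact (toEuclideanCLM (𝕜 := ℝ) M).le_opNorm v
    _ = opN M * (u ⬝ᵥ u) := by rw [← hv]; ring

omit [DecidableEq n] in
lemma dotProduct_mulVec_transpose_mul_mul_self (S M : Matrix n n ℝ) (x : n → ℝ) :
    x ⬝ᵥ (Sᵀ * M * S) *ᵥ x = (S *ᵥ x) ⬝ᵥ M *ᵥ (S *ᵥ x) := by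
  rw [← mulVec_mulVec, ← mulVec_mulVec, dotProduct_mulVec, vecMul_transpose, dotProduct_comm]

lemma PosDef.abs_dotProduct_mulVec_le {D : Matrix n n ℝ} (hD : D.PosDef) (E : Matrix n n ℝ)
    (x : n → ℝ) :
    |x ⬝ᵥ E *ᵥ x| ≤ opN ((CFC.sqrt D)⁻¹ * E * (CFC.sqrt D)⁻¹) * (x ⬝ᵥ D *ᵥ x) := by
  set S := CFC.sqrt D
  have hS : S.PosDef := (hD.isStrictlyPositive.sqrt).posDef
  have hSt : Sᵀ = S := by simpa using hS.isHermitian.eq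
  have hSdet : IsUnit S.det := (isUnit_iff_isUnit_det S).mp hS.isUnit
  have hE : E = Sᵀ * (S⁻¹ * E * S⁻¹) * S := by
    rw [hSt, mul_assoc, nonsing_inv_mul_cancel_right S _ hSdet,
      mul_nonsing_inv_cancel_left S _ hSdet]
  have hDS : D = Sᵀ * 1 * S := by
    rw [hSt, Matrix.mul_one, CFC.sqrt_mul_sqrt_self D hD.posSemidef.nonneg]
  conv_lhs => rw [hE]
  rw [hDS, dotProduct_mulVec_transpose_mul_mul_self, dotProduct_mulVec_transpose_mul_mul_self,
    one_mulVec]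
  exact abs_dotProduct_mulVec_self_le_opN _ _

lemma PosDef.two_mul_dotProduct_sub_le {A : Matrix n n ℝ} (hA : A.PosDef) (x y : n → ℝ) :
    2 * (x ⬝ᵥ y) - x ⬝ᵥ A *ᵥ x ≤ y ⬝ᵥ A⁻¹ *ᵥ y := by
  set z := A⁻¹ *ᵥ y
  have hAz : A *ᵥ z = y := by
    rw [mulVec_mulVec, mul_nonsing_inv A ((isUnit_iff_isUnit_det A).mp hA.isUnit), one_mulVec]
  have hsymm : z ⬝ᵥ A *ᵥ x = x ⬝ᵥ y := by
    rw [dotProduct_mulVec, ← mulVec_transpose, (by simpa using hA.isHermitian.eq : Aᵀ = A), hAz,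
      dotProduct_comm]
  have hsq : 0 ≤ (x - z) ⬝ᵥ A *ᵥ (x - z) := by
    simpa using hA.posSemidef.dotProduct_mulVec_nonneg (x - z)
  simp only [mulVec_sub, sub_dotProduct, dotProduct_sub, hAz, hsymm] at hsq
  rw [dotProduct_comm z y] at hsq
  linarith

lemma PosDef.mul_dotProduct_inv_mulVec_le {A B : Matrix n n ℝ} (hA : A.PosDef) (hB : B.PosDef)
    {c : ℝ} (hc : 0 ≤ c) (h : ∀ x, c * (x ⬝ᵥ A *ᵥ x) ≤ x ⬝ᵥ B *ᵥ x) (y : n → ℝ) :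
    c * (y ⬝ᵥ B⁻¹ *ᵥ y) ≤ y ⬝ᵥ A⁻¹ *ᵥ y := by
  set u := B⁻¹ *ᵥ y
  have hBu : u ⬝ᵥ B *ᵥ u = y ⬝ᵥ B⁻¹ *ᵥ y := by
    rw [mulVec_mulVec, mul_nonsing_inv B ((isUnit_iff_isUnit_det B).mp hB.isUnit), one_mulVec,
      dotProduct_comm]
  have hcu : c • u ⬝ᵥ A *ᵥ (c • u) = c * (c * (u ⬝ᵥ A *ᵥ u)) := by
    simp only [mulVec_smul, smul_dotProduct, dotProduct_smul, smul_eq_mul]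
  -- test the variational bound for `A` at `x = c • B⁻¹ y`
  have hvar := hA.two_mul_dotProduct_sub_le (c • u) y
  rw [hcu, smul_dotProduct, smul_eq_mul] at hvar
  have hcmp := mul_le_mul_of_nonneg_left (h u) hc
  have hyu : u ⬝ᵥ y = y ⬝ᵥ B⁻¹ *ᵥ y := dotProduct_comm _ _
  nlinarith

end Matrix

lemma sandwich_bounds_of_le_of_le {ρ a b : ℝ} (hρ0 : 0 ≤ ρ) (hρ1 : ρ < 1)
    (hlo : (1 + ρ)⁻¹ * b ≤ a) (hhi : (1 - ρ) * a ≤ b) :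
    1 / (1 + ρ) * b ≤ a ∧ a ≤ 1 / (1 - ρ) * b ∧ |a - b| ≤ ρ / (1 - ρ) * b := by
  have h1m : 0 < 1 - ρ := by linarith
  have hup : a ≤ b / (1 - ρ) := by rwa [le_div_iff₀ h1m, mul_comm]
  have hb : b ≤ (1 + ρ) * a := by rwa [inv_mul_le_iff₀ (by linarith)] at hlo
  have hρa : ρ * a ≤ ρ * (b / (1 - ρ)) := mul_le_mul_of_nonneg_left hup hρ0
  refine ⟨by rwa [one_div], by rwa [one_div_mul_eq_div], ?_⟩
  rw [div_mul_eq_mul_div, mul_div_assoc, abs_le]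
  constructor <;> linarith

theorem additive_proxy_sandwich_general
    {n : Type*} [Fintype n] [DecidableEq n]
    (HSS D E M : Matrix n n ℝ)
    (hHSS : HSS.PosDef) (hD : D.PosDef)
    (hE : E = HSS - D)
    (hM : M = (CFC.sqrt D)⁻¹ * E * (CFC.sqrt D)⁻¹)
    (ρ : ℝ) (hρ : ρ = opN M) (hρ1 : ρ < 1)
    (g : n → ℝ) (Δ Δadd : ℝ)
    (hΔ : Δ = (1/2) * (g ⬝ᵥ (HSS⁻¹ *ᵥ g)))
    (hΔadd : Δadd = (1/2) * (g ⬝ᵥ (D⁻¹ *ᵥ g))) :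
    (1 / (1 + ρ)) * Δadd ≤ Δ ∧ Δ ≤ (1 / (1 - ρ)) * Δadd ∧
    |Δ - Δadd| ≤ (ρ / (1 - ρ)) * Δadd := by
  have hρ0 : 0 ≤ ρ := hρ ▸ norm_nonneg _
  have hEx : ∀ x, |x ⬝ᵥ E *ᵥ x| ≤ ρ * (x ⬝ᵥ D *ᵥ x) := by
    subst hρ hM
    exact hD.abs_dotProduct_mulVec_le E
  have hHx : ∀ x, x ⬝ᵥ HSS *ᵥ x = x ⬝ᵥ D *ᵥ x + x ⬝ᵥ E *ᵥ x := by
    intro x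
    rw [hE, sub_mulVec, dotProduct_sub]
    ring
  have hHD : ∀ x, (1 + ρ)⁻¹ * (x ⬝ᵥ HSS *ᵥ x) ≤ x ⬝ᵥ D *ᵥ x := fun x ↦ by
    rw [inv_mul_le_iff₀ (by linarith)]
    linarith [hHx x, (abs_le.mp (hEx x)).2]
  have hDH : ∀ x, (1 - ρ) * (x ⬝ᵥ D *ᵥ x) ≤ x ⬝ᵥ HSS *ᵥ x := fun x ↦ by
    linarith [hHx x, (abs_le.mp (hEx x)).1]
  have hlo := hHSS.mul_dotProduct_inv_mulVec_le hD (by positivity) hHD g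
  have hhi := hD.mul_dotProduct_inv_mulVec_le hHSS (by linarith) hDH g
  subst hΔ hΔadd
  exact sandwich_bounds_of_le_of_le hρ0 hρ1 (by linarith) (by linarith)

/-- the additive proxy sandwich:
`Δ_add/(1+ρ) ≤ Δ ≤ Δ_add/(1-ρ)` and `|Δ - Δ_add| ≤ ρ/(1-ρ) Δ_add`. -/
theorem additive_proxy_sandwich
    {n L : Type*} [Fintype n] [DecidableEq n] [DecidableEq L]
    (blk : n → L) (HSS D E M : Matrix n n ℝ)
    (hHSS : HSS.PosDef) (hD : D.PosDef)
    (hDdef : ∀ i j, D i j = if blk i = blk j then HSS i j else 0)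
    (hE : E = HSS - D)
    (hM : M = (CFC.sqrt D)⁻¹ * E * (CFC.sqrt D)⁻¹)
    (ρ : ℝ) (hρ : ρ = opN M) (hρ1 : ρ < 1)
    (g : n → ℝ) (Δ Δadd : ℝ)
    (hΔ : Δ = (1/2) * (g ⬝ᵥ (HSS⁻¹ *ᵥ g)))
    (hΔadd : Δadd = (1/2) * (g ⬝ᵥ (D⁻¹ *ᵥ g))) :
    (1 / (1 + ρ)) * Δadd ≤ Δ ∧ Δ ≤ (1 / (1 - ρ)) * Δadd ∧
    |Δ - Δadd| ≤ (ρ / (1 - ρ)) * Δadd :=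
  additive_proxy_sandwich_general HSS D E M hHSS hD hE hM ρ hρ hρ1 g Δ Δadd hΔ hΔadd
end
end
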